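/- arXiv:2404.05190 — 3 statements merged into one kernel-verified Lean document; each statement's English description precedes it below -/
import Mathlib

section
/- Let d be a positive squarefree integer having a prime factor congruent to 3 modulo 4. Then there is no element α of the field K₁ = ℚ(√2, √d) whose field norm from K₁ down to ℚ(√2) equals 1 + √2. -/
/-!
Write `α = x + y√d` with `x, y ∈ ℚ(√2)`, so that its norm is `x² - d y²`. Taking norms once
more, down to `ℚ`, an equation `x² - d y² = 1 + √2` would give rationals `A, B` with
`A² - d B² = N(1 + √2) = -1`, i.e. `d = (A/B)² + (1/B)²` would be a sum of two rational squares.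
That is impossible because the prime `ℓ ≡ 3 (mod 4)` divides `d` exactly once. The same
obstruction shows `√d ∉ ℚ(√2)`, which is what makes `1, √d` a basis of `K₁` over `ℚ(√2)`.
-/

open NumberField IntermediateField

/-- `ℚ(√2)` as a subfield of `ℝ`. -/
noncomputable def Qrt2 : IntermediateField ℚ ℝ :=
  IntermediateField.adjoin ℚ ({Real.sqrt 2} : Set ℝ)

open Polynomial

theorem Algebra.norm_eq_sq_sub_mul_sq {R L : Type*} [CommRing R] [CommRing L] [Algebra R L]
    {k : R} (b : Module.Basis (Fin 2) R L) (hb0 : b 0 = 1) (hb1 : b 1 ^ 2 = algebraMap R L k)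
    (z : L) : Algebra.norm R z = b.repr z 0 ^ 2 - k * b.repr z 1 ^ 2 := by
  have hz : z = b.repr z 0 • b 0 + b.repr z 1 • b 1 := by
    rw [← Fin.sum_univ_two fun i => b.repr z i • b i, b.sum_repr]
  have hz0 : z * b 0 = z := by rw [hb0, mul_one]
  have hz1 : z * b 1 = (k * b.repr z 1) • b 0 + b.repr z 0 • b 1 := by
    conv_lhs => rw [hz]
    rw [hb0, add_mul, smul_mul_assoc, smul_mul_assoc, one_mul, ← sq, hb1,
      Algebra.algebraMap_eq_smul_one, mul_smul, smul_comm k, add_comm]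
  rw [Algebra.norm_eq_matrix_det b, Matrix.det_fin_two]
  simp only [leftMulMatrix_eq_repr_mul, hz0, hz1, map_add, map_smul, Module.Basis.repr_self,
    Finsupp.smul_single, smul_eq_mul, mul_one, Finsupp.single_mul, Finsupp.coe_add, Pi.add_apply,
    Finsupp.mul_apply, ne_eq, one_ne_zero, not_false_eq_true, Finsupp.single_eq_of_ne, mul_zero,
    Finsupp.single_eq_same, zero_add, zero_ne_one, add_zero]
  ring

namespace IntermediateField

variable {F E : Type*} [Field F] [Field E] [Algebra F E] {t : E} {k : F}

theorem minpoly_eq_X_sq_sub_C (ht : t ^ 2 = algebraMap F E k)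
    (hF : t ∉ Set.range (algebraMap F E)) : minpoly F t = X ^ 2 - C k := by
  refine (minpoly.eq_of_irreducible_of_monic ?_ ?_ (monic_X_pow_sub_C k two_ne_zero)).symm
  · refine X_pow_sub_C_irreducible_of_prime Nat.prime_two fun s hs => ?_
    have : (t - algebraMap F E s) * (t + algebraMap F E s) = 0 := by
      rw [mul_comm, ← sq_sub_sq, ht, ← map_pow, hs, sub_self]
    rcases mul_eq_zero.1 this with h | h
    · exact hF ⟨s, (sub_eq_zero.1 h).symm⟩
    · exact hF ⟨-s, by rw [map_neg, eq_neg_of_add_eq_zero_left h]⟩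
  · simp [ht]

variable (ht : t ^ 2 = algebraMap F E k) (hF : t ∉ Set.range (algebraMap F E))
include ht hF

noncomputable def adjoinSqrtBasis : Module.Basis (Fin 2) F F⟮t⟯ :=
  (adjoin.powerBasis (IsIntegral.of_pow two_pos (ht ▸ isIntegral_algebraMap))).basis.reindex
    (finCongr (by simp [minpoly_eq_X_sq_sub_C ht hF]))

theorem adjoinSqrtBasis_zero : adjoinSqrtBasis ht hF 0 = 1 := by
  simp [adjoinSqrtBasis]

theorem adjoinSqrtBasis_one : adjoinSqrtBasis ht hF 1 = AdjoinSimple.gen F t := by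
  simp [adjoinSqrtBasis]

theorem exists_coe_eq_add_mul (z : F⟮t⟯) :
    ∃ x y : F, (z : E) = algebraMap F E x + algebraMap F E y * t := by
  set b := adjoinSqrtBasis ht hF
  refine ⟨b.repr z 0, b.repr z 1, ?_⟩
  conv_lhs => rw [← b.sum_repr z, Fin.sum_univ_two, adjoinSqrtBasis_zero, adjoinSqrtBasis_one]
  simp [Algebra.smul_def]

theorem exists_norm_eq_sq_sub_mul_sq (z : F⟮t⟯) :
    ∃ x y : F, Algebra.norm F z = x ^ 2 - k * y ^ 2 := by
  have hgen : AdjoinSimple.gen F t ^ 2 = algebraMap F F⟮t⟯ k := Subtype.ext (by simpa using ht)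
  exact ⟨_, _, Algebra.norm_eq_sq_sub_mul_sq (adjoinSqrtBasis ht hF) (adjoinSqrtBasis_zero ht hF)
    (by rw [adjoinSqrtBasis_one, hgen]) z⟩

end IntermediateField

theorem eq_zero_of_add_mul_sqrt_two_eq_zero {a b : ℚ} (h : (a : ℝ) + b * √2 = 0) :
    a = 0 ∧ b = 0 := by
  have hb : b = 0 := by
    by_contra hb
    exact ((irrational_sqrt_two.ratCast_mul hb).ratCast_add (q := a)).ne_zero h
  subst hb
  simpa using h

theorem exists_coe_eq_add_mul_sqrt_two (z : Qrt2) : ∃ a b : ℚ, (z : ℝ) = a + b * √2 := by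
  have ht : √2 ^ 2 = algebraMap ℚ ℝ 2 := by simp
  have hF : √2 ∉ Set.range (algebraMap ℚ ℝ) := by simpa [Irrational] using irrational_sqrt_two
  simpa using exists_coe_eq_add_mul ht hF z

section

variable {d ℓ : ℕ} (hd : Squarefree d) (hℓ : ℓ.Prime) (hℓd : ℓ ∣ d) (hℓ4 : ℓ % 4 = 3)
include hd hℓ hℓd hℓ4

theorem Nat.sq_add_sq_ne_mul_sq {q : ℕ} (hq : q ≠ 0) (x y : ℕ) : x ^ 2 + y ^ 2 ≠ d * q ^ 2 := by
  intro h
  have : Fact ℓ.Prime := ⟨hℓ⟩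
  have hdq : d * q ^ 2 ≠ 0 := mul_ne_zero hd.ne_zero (pow_ne_zero 2 hq)
  have heven := Nat.eq_sq_add_sq_iff.1 ⟨x, y, h.symm⟩ ℓ
    (Nat.mem_primeFactors.2 ⟨hℓ, dvd_mul_of_dvd_left hℓd _, hdq⟩) hℓ4
  have hval : padicValNat ℓ d = 1 := by
    rw [← Nat.factorization_def d hℓ, Nat.factorization_eq_one_of_squarefree hd hℓ hℓd]
  rw [padicValNat.mul hd.ne_zero (pow_ne_zero 2 hq), padicValNat.pow q 2, hval, add_comm]
    at heven
  exact Nat.not_even_iff_odd.2 (odd_two_mul_add_one _) heven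

theorem Rat.sq_add_sq_ne_natCast (a b : ℚ) : a ^ 2 + b ^ 2 ≠ d := by
  intro h
  refine Nat.sq_add_sq_ne_mul_sq hd hℓ hℓd hℓ4 (mul_ne_zero a.den_nz b.den_nz)
    (a.num * b.den).natAbs (b.num * a.den).natAbs ?_
  have hcleared : ((a.num * b.den : ℤ) : ℚ) ^ 2 + ((b.num * a.den : ℤ) : ℚ) ^ 2
      = d * ((a.den * b.den : ℕ) : ℚ) ^ 2 := by
    rw [← h]
    push_cast
    rw [← a.mul_den_eq_num, ← b.mul_den_eq_num]
    ring
  zify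
  simp only [sq_abs]
  exact_mod_cast hcleared

theorem Rat.sq_sub_mul_sq_ne_neg_one (a b : ℚ) : a ^ 2 - d * b ^ 2 ≠ -1 := by
  intro h
  have hb : b ≠ 0 := by
    rintro rfl
    nlinarith [sq_nonneg a]
  refine Rat.sq_add_sq_ne_natCast hd hℓ hℓd hℓ4 (a / b) (1 / b) ?_
  field_simp
  linarith

theorem sqrt_natCast_notMem_range_algebraMap_Qrt2 :
    √(d : ℝ) ∉ Set.range (algebraMap Qrt2 ℝ) := by
  rintro ⟨z, hz⟩
  obtain ⟨a, b, hab⟩ := exists_coe_eq_add_mul_sqrt_two z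
  have hsep : ((a ^ 2 + 2 * b ^ 2 - d : ℚ) : ℝ) + ((2 * a * b : ℚ) : ℝ) * √2 = 0 := by
    have hdz : (d : ℝ) = (z : ℝ) ^ 2 := by rw [← Real.sq_sqrt d.cast_nonneg, ← hz]; rfl
    push_cast
    linear_combination -hdz - hab * ((z : ℝ) + a + b * √2) - b ^ 2 * Real.sq_sqrt zero_le_two
  obtain ⟨h₀, h₁⟩ := eq_zero_of_add_mul_sqrt_two_eq_zero hsep
  rcases mul_eq_zero.1 (by linear_combination h₁ / 2 : a * b = 0) with rfl | rfl
  · exact Rat.sq_add_sq_ne_natCast hd hℓ hℓd hℓ4 b b (by linear_combination h₀)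
  · exact Rat.sq_add_sq_ne_natCast hd hℓ hℓd hℓ4 a 0 (by linear_combination h₀)

theorem sq_sub_mul_sq_ne_one_add_sqrt_two (x y : Qrt2) :
    (x : ℝ) ^ 2 - d * (y : ℝ) ^ 2 ≠ 1 + √2 := by
  intro h
  obtain ⟨a, b, hx⟩ := exists_coe_eq_add_mul_sqrt_two x
  obtain ⟨c, e, hy⟩ := exists_coe_eq_add_mul_sqrt_two y
  rw [hx, hy] at h
  have hsep : ((a ^ 2 + 2 * b ^ 2 - d * c ^ 2 - 2 * d * e ^ 2 - 1 : ℚ) : ℝ)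
      + ((2 * a * b - 2 * d * c * e - 1 : ℚ) : ℝ) * √2 = 0 := by
    push_cast
    linear_combination h - (b ^ 2 - d * e ^ 2) * Real.sq_sqrt zero_le_two
  obtain ⟨h₀, h₁⟩ := eq_zero_of_add_mul_sqrt_two_eq_zero hsep
  -- `A = x x̄ + d y ȳ` and `B = x ȳ + x̄ y`, so `A² - d B²` is the norm of `x² - d y²` down to `ℚ`.
  apply Rat.sq_sub_mul_sq_ne_neg_one hd hℓ hℓd hℓ4
    (a ^ 2 - 2 * b ^ 2 + d * c ^ 2 - 2 * d * e ^ 2) (2 * a * c - 4 * b * e)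
  linear_combination (a ^ 2 + 2 * b ^ 2 - d * c ^ 2 - 2 * d * e ^ 2 + 1) * h₀
    - 2 * (2 * a * b - 2 * d * c * e + 1) * h₁

end

theorem stmt2_general (d : ℕ) (hd : Squarefree d)
    (hpf : ∃ ℓ : ℕ, ℓ.Prime ∧ ℓ ∣ d ∧ ℓ % 4 = 3) :
    ¬ ∃ α : ↥(IntermediateField.adjoin ↥Qrt2 ({Real.sqrt d} : Set ℝ)),
        ((Algebra.norm ↥Qrt2 α : ↥Qrt2) : ℝ) = 1 + Real.sqrt 2 := by
  rintro ⟨α, hα⟩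
  obtain ⟨ℓ, hℓ, hℓd, hℓ4⟩ := hpf
  have ht : √(d : ℝ) ^ 2 = algebraMap Qrt2 ℝ d := by simp
  obtain ⟨x, y, hxy⟩ := exists_norm_eq_sq_sub_mul_sq ht
    (sqrt_natCast_notMem_range_algebraMap_Qrt2 hd hℓ hℓd hℓ4) α
  rw [hxy] at hα
  push_cast at hα
  exact sq_sub_mul_sq_ne_one_add_sqrt_two hd hℓ hℓd hℓ4 x y hα

/-- Let `d` be a positive squarefree integer having a prime factor
congruent to `3` modulo `4`. Then there is no element `α` of `K₁ = ℚ(√2, √d)` whose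
field norm from `K₁` down to `ℚ(√2)` equals `1 + √2`. -/
theorem stmt2 (d : ℕ) (hd0 : 0 < d) (hd : Squarefree d)
    (hpf : ∃ ℓ : ℕ, ℓ.Prime ∧ ℓ ∣ d ∧ ℓ % 4 = 3) :
    ¬ ∃ α : ↥(IntermediateField.adjoin ↥Qrt2 ({Real.sqrt d} : Set ℝ)),
        ((Algebra.norm ↥Qrt2 α : ↥Qrt2) : ℝ) = 1 + Real.sqrt 2 :=
  stmt2_general d hd hpf
end

section
/- Let p, q, r be distinct odd primes satisfying p ≡ 9 (mod 16), q ≡ 3 (mod 8), r ≡ 3 (mod 8), Legendre symbol (qr/p) = -1, and 2^((p-1)/4) ≡ -1 (mod p). Then -1 is a norm in the extension k₁/ℚ(√2), where k₁ = ℚ(√2, √(p·q·r)): there exists α ∈ k₁ with N_{k₁/ℚ(√2)}(α) = -1. -/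
/-!
Writing `d = pqr`, the norm from `K(√d)` to `K = ℚ(√2)` is `a² - d b²`, so `-1` is a norm as soon as
`d = u² + v²` with `u, v ∈ K` (take `a = u / v`, `b = 1 / v`). Now `p ≡ 1 (mod 4)` is a sum of two
integer squares, while each of `q, r ≡ 3 (mod 8)` has the form `a² + 2b² = a² + (b√2)²`, since `-2`
is a square modulo it. Products of sums of two squares are sums of two squares.
-/

open NumberField IntermediateField

open Polynomial Module

theorem Nat.Prime.exists_dvd_sq_add_two_sq_lt {q : ℕ} (hq : q.Prime) {n : ℤ}
    (hn : (q : ℤ) ∣ n ^ 2 + 2) :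
    ∃ x y : ℤ, (q : ℤ) ∣ x ^ 2 + 2 * y ^ 2 ∧ 0 < x ^ 2 + 2 * y ^ 2 ∧
      x ^ 2 + 2 * y ^ 2 < 3 * q := by
  set N := q.sqrt
  have hN : N ^ 2 < q :=
    (Nat.sqrt_le' q).lt_of_ne fun h => Irreducible.not_isSquare hq ⟨N, by rw [← h, sq]⟩
  have hqN : (q : ℝ) < (N + 1) ^ 2 := by exact_mod_cast (sq (N + 1)).symm ▸ Nat.lt_succ_sqrt q
  obtain ⟨j, k, hk0, hkN, hjk⟩ :=
    Real.exists_int_int_abs_mul_sub_le ((n : ℝ) / q) (Nat.sqrt_pos.mpr hq.pos)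
  refine ⟨k * n - j * q, k, ?_, by positivity, ?_⟩
  · have hexp : (k * n - j * q) ^ 2 + 2 * k ^ 2 =
        k ^ 2 * (n ^ 2 + 2) + q * (j ^ 2 * q - 2 * k * n * j) := by
      ring
    rw [hexp]
    exact dvd_add (dvd_mul_of_dvd_right hn _) (dvd_mul_right _ _)
  · -- Dirichlet approximation of `n / q` with denominator `k ≤ ⌊√q⌋` makes `|k * n - j * q| ≤ ⌊√q⌋`.
    have hq0 : (0 : ℝ) < q := by exact_mod_cast hq.pos
    have hxR : |((k * n - j * q : ℤ) : ℝ)| < N + 1 := by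
      have hscale : |((k * n - j * q : ℤ) : ℝ)| = q * |k * ((n : ℝ) / q) - j| := by
        rw [← abs_of_pos hq0, ← abs_mul, abs_of_pos hq0]
        congr 1
        push_cast
        field_simp
      rw [hscale]
      calc (q : ℝ) * |k * ((n : ℝ) / q) - j| ≤ q * (1 / (N + 1)) := by gcongr
        _ < N + 1 := by
          rw [mul_one_div, div_lt_iff₀ (by positivity)]
          nlinarith
    have hx : |k * n - j * q| ≤ N := by
      have : |k * n - j * q| < N + 1 := by exact_mod_cast hxR
      omega
    have hx2 : (k * n - j * q) ^ 2 ≤ (N : ℤ) ^ 2 := sq_le_sq' (abs_le.mp hx).1 (abs_le.mp hx).2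
    have hk2 : k ^ 2 ≤ (N : ℤ) ^ 2 := pow_le_pow_left₀ hk0.le hkN 2
    have hNq : ((N ^ 2 : ℕ) : ℤ) < q := by exact_mod_cast hN
    push_cast at hNq
    linarith

theorem Nat.Prime.exists_sq_add_two_sq {q : ℕ} [Fact q.Prime] (hq : q % 8 = 1 ∨ q % 8 = 3) :
    ∃ a b : ℤ, a ^ 2 + 2 * b ^ 2 = q := by
  obtain ⟨s, hs⟩ := (ZMod.exists_sq_eq_neg_two_iff (by omega)).mpr hq
  have hn : (q : ℤ) ∣ (s.val : ℤ) ^ 2 + 2 := by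
    rw [← ZMod.intCast_zmod_eq_zero_iff_dvd]
    push_cast
    rw [ZMod.natCast_zmod_val, sq, ← hs]
    ring
  obtain ⟨x, y, ⟨t, ht⟩, hpos, hlt⟩ := Nat.Prime.exists_dvd_sq_add_two_sq_lt Fact.out hn
  have hq0 : (0 : ℤ) < q := by exact_mod_cast (Fact.out : q.Prime).pos
  obtain rfl | rfl : t = 1 ∨ t = 2 := by
    have : 0 < t := by nlinarith
    have : t < 3 := by nlinarith
    omega
  · exact ⟨x, y, by linarith⟩
  · obtain ⟨w, rfl⟩ : Even x := ((Int.even_pow (n := 2)).mp ⟨q - y ^ 2, by linarith⟩).1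
    exact ⟨y, w, by linarith⟩

section QuadraticNorm

variable {K E : Type*} [Field K] [Field E] [Algebra K E]

theorem IntermediateField.AdjoinSimple.norm_add_mul_gen_of_sq_eq {x : E} {d : K}
    (hx : x ^ 2 = algebraMap K E d) (hd : ∀ c : K, c ^ 2 ≠ d) (a b : K) :
    Algebra.norm K (algebraMap K K⟮x⟯ a + algebraMap K K⟮x⟯ b * AdjoinSimple.gen K x) =
      a ^ 2 - d * b ^ 2 := by
  have hroot : aeval x (X ^ 2 - C d) = 0 := by simp [hx]
  have hmonic : (X ^ 2 - C d).Monic := monic_X_pow_sub_C d two_ne_zero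
  have hint : IsIntegral K x := ⟨_, hmonic, hroot⟩
  have hmin : minpoly K x = X ^ 2 - C d := (minpoly.eq_of_irreducible_of_monic
    (X_pow_sub_C_irreducible_of_prime Nat.prime_two hd) hroot hmonic).symm
  have hdim : (adjoin.powerBasis hint).dim = 2 := by
    rw [adjoin.powerBasis_dim, hmin, natDegree_X_pow_sub_C]
  set g := AdjoinSimple.gen K x
  have hg : g ^ 2 = algebraMap K K⟮x⟯ d := Subtype.ext (by simp [g, hx])
  let B : Basis (Fin 2) K K⟮x⟯ := (adjoin.powerBasis hint).basis.reindex (finCongr hdim)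
  have hB0 : B 0 = 1 := by simp [B]
  have hB1 : B 1 = g := by simp [B, g]
  have hrepr (c e : K) (i : Fin 2) : B.repr (c • B 0 + e • B 1) i = ![c, e] i := by
    fin_cases i <;> simp
  have hmul0 : (algebraMap K K⟮x⟯ a + algebraMap K K⟮x⟯ b * g) * B 0 = a • B 0 + b • B 1 := by
    simp [hB0, hB1, Algebra.algebraMap_eq_smul_one]
  have hmul1 : (algebraMap K K⟮x⟯ a + algebraMap K K⟮x⟯ b * g) * B 1 =
      (b * d) • B 0 + a • B 1 := by
    rw [hB0, hB1, add_mul, mul_assoc, ← sq, hg]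
    simp only [Algebra.algebraMap_eq_smul_one, smul_mul_assoc, one_mul, smul_smul]
    rw [add_comm]
  rw [Algebra.norm_eq_matrix_det B, Matrix.det_fin_two]
  simp only [Algebra.leftMulMatrix_eq_repr_mul, hmul0, hmul1, hrepr]
  simp only [Matrix.cons_val_zero, Matrix.cons_val_one]
  ring

theorem IntermediateField.exists_norm_eq_neg_one_of_sq_eq_sq_add_sq {x : E} {u v : K}
    (hx : x ^ 2 = algebraMap K E (u ^ 2 + v ^ 2)) :
    ∃ α : K⟮x⟯, Algebra.norm K α = -1 := by
  by_cases hsq : ∃ c : K, c ^ 2 = u ^ 2 + v ^ 2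
  · obtain ⟨c, hc⟩ := hsq
    have hbot : K⟮x⟯ = ⊥ := by
      rw [adjoin_simple_eq_bot_iff]
      rw [← hc, map_pow] at hx
      rcases sq_eq_sq_iff_eq_or_eq_neg.mp hx with rfl | rfl
      · exact algebraMap_mem ⊥ c
      · exact neg_mem (algebraMap_mem ⊥ c)
    refine ⟨algebraMap K K⟮x⟯ (-1), ?_⟩
    rw [Algebra.norm_algebraMap, finrank_eq_one_iff.mpr hbot, pow_one]
  · push Not at hsq
    have hv : v ≠ 0 := by
      rintro rfl
      exact hsq u (by ring)
    refine ⟨algebraMap K K⟮x⟯ (u / v) + algebraMap K K⟮x⟯ (1 / v) * AdjoinSimple.gen K x, ?_⟩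
    rw [AdjoinSimple.norm_add_mul_gen_of_sq_eq hx hsq]
    field_simp
    ring

end QuadraticNorm

theorem Qrt2.exists_natCast_eq_sq_add_sq {n : ℕ} {a b : ℤ} (h : a ^ 2 + 2 * b ^ 2 = n) :
    ∃ u v : ↥Qrt2, (n : ↥Qrt2) = u ^ 2 + v ^ 2 := by
  let s : ↥Qrt2 := ⟨√2, subset_adjoin ℚ _ rfl⟩
  have hs : s ^ 2 = 2 := Subtype.ext (by simp [s]; rfl)
  refine ⟨a, b * s, ?_⟩
  rw [mul_pow, hs, ← Int.cast_natCast, ← h]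
  push_cast
  ring

theorem stmt3_general (p q r : ℕ) [Fact p.Prime] [Fact q.Prime] [Fact r.Prime]
    (hp16 : p % 16 = 9) (hq8 : q % 8 = 3) (hr8 : r % 8 = 3) :
    ∃ α : ↥(IntermediateField.adjoin ↥Qrt2 ({Real.sqrt (p * q * r)} : Set ℝ)),
      Algebra.norm ↥Qrt2 α = -1 := by
  obtain ⟨a, b, hp⟩ := Nat.Prime.sq_add_sq (p := p) (by omega)
  obtain ⟨c, e, hq⟩ := Nat.Prime.exists_sq_add_two_sq (q := q) (by omega)
  obtain ⟨f, g, hr⟩ := Nat.Prime.exists_sq_add_two_sq (q := r) (by omega)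
  obtain ⟨u₂, v₂, hq'⟩ := Qrt2.exists_natCast_eq_sq_add_sq hq
  obtain ⟨u₃, v₃, hr'⟩ := Qrt2.exists_natCast_eq_sq_add_sq hr
  have hp' : (p : ↥Qrt2) = (a : ↥Qrt2) ^ 2 + (b : ↥Qrt2) ^ 2 := by rw [← hp]; push_cast; rfl
  obtain ⟨u₁, v₁, hpq⟩ := sq_add_sq_mul hp' hq'
  obtain ⟨u, v, hpqr⟩ := sq_add_sq_mul hpq hr'
  refine exists_norm_eq_neg_one_of_sq_eq_sq_add_sq (u := u) (v := v) ?_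
  rw [Real.sq_sqrt (by positivity), ← hpqr]
  simp

/-- Let `p, q, r` be distinct odd primes satisfying `p ≡ 9 (mod 16)`,
`q ≡ 3 (mod 8)`, `r ≡ 3 (mod 8)`, Legendre symbol `(qr/p) = -1`, and
`2^((p-1)/4) ≡ -1 (mod p)`. Then `-1` is a norm in the extension `k₁/ℚ(√2)`, where
`k₁ = ℚ(√2, √(p·q·r))`. -/
theorem stmt3 (p q r : ℕ) [Fact p.Prime] [Fact q.Prime] [Fact r.Prime]
    (hp2 : p ≠ 2) (hq2 : q ≠ 2) (hr2 : r ≠ 2)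
    (hpq : p ≠ q) (hpr : p ≠ r) (hqr : q ≠ r)
    (hp16 : p % 16 = 9) (hq8 : q % 8 = 3) (hr8 : r % 8 = 3)
    (hleg : legendreSym p (q * r) = -1)
    (hquart : (2 : ZMod p) ^ ((p - 1) / 4) = -1) :
    ∃ α : ↥(IntermediateField.adjoin ↥Qrt2 ({Real.sqrt (p * q * r)} : Set ℝ)),
      Algebra.norm ↥Qrt2 α = -1 :=
  stmt3_general p q r hp16 hq8 hr8
end

section
/- Let d be a positive squarefree integer having a prime factor congruent to 3 modulo 4. Then there is no element u of the field k₂ = ℚ(√(2+√2), √d) whose field norm from k₂ down to ℚ(√2) equals 1 + √2. -/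
/-!
Transitivity of the norm in the tower `ℚ ⊆ ℚ(√2) ⊆ k₂` gives
`N_{k₂/ℚ}(u) = N_{ℚ(√2)/ℚ}(1 + √2) = 1 - 2 = -1`. Running the same tower through
`ℚ ⊆ ℚ(√d) ⊆ k₂` shows that `-1` is a norm from `ℚ(√d)`, i.e. `x² - d y² = -1` with `x, y ∈ ℚ`.
Clearing denominators, `d b²` is a sum of two squares although a prime `ℓ ≡ 3 (mod 4)` divides
it to the odd power `1 + 2 v_ℓ(b)`.

Norms in a quadratic extension `K⟮r⟯`, `r² = c`, are read off from its identification with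
`QuadraticAlgebra K c 0`, whose norm is `x² - c y²`.
-/

open NumberField IntermediateField

/-- `k₂ = ℚ(√(2+√2), √d)` as an extension of `ℚ(√2)` inside `ℝ`.
(Note `√2 = (√(2+√2))² - 2 ∈ ℚ(√(2+√2), √d)`, so this adjoin, i.e. the compositum of
`ℚ(√2)` with `√(2+√2)` and `√d`, has the same underlying subfield of `ℝ`.) -/
noncomputable def ktwo (d : ℕ) : IntermediateField ↥Qrt2 ℝ :=
  IntermediateField.adjoin ↥Qrt2 ({Real.sqrt (2 + Real.sqrt 2), Real.sqrt d} : Set ℝ)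

open Polynomial

theorem Int.sq_add_sq_ne_mul_sq {d ℓ : ℕ} (hd : Squarefree d) (hℓ : ℓ.Prime) (hℓd : ℓ ∣ d)
    (hℓ4 : ℓ % 4 = 3) {a b c : ℤ} (hb : b ≠ 0) : a ^ 2 + c ^ 2 ≠ d * b ^ 2 := by
  intro h
  have : Fact ℓ.Prime := ⟨hℓ⟩
  have hn : d * b.natAbs ^ 2 = a.natAbs ^ 2 + c.natAbs ^ 2 := by
    zify; simp only [sq_abs]; exact h.symm
  have hn0 : d * b.natAbs ^ 2 ≠ 0 := mul_ne_zero hd.ne_zero (by positivity)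
  have hmem : ℓ ∈ (d * b.natAbs ^ 2).primeFactors :=
    Nat.mem_primeFactors.2 ⟨hℓ, hℓd.mul_right _, hn0⟩
  have heven := Nat.eq_sq_add_sq_iff.1 ⟨_, _, hn⟩ ℓ hmem hℓ4
  have hval : padicValNat ℓ d = 1 := by
    rw [← Nat.factorization_def _ hℓ, Nat.factorization_eq_one_of_squarefree hd hℓ hℓd]
  rw [padicValNat.mul hd.ne_zero (by positivity), padicValNat.pow, hval] at heven
  exact Nat.not_even_iff_odd.2 (odd_two_mul_add_one _) (by rwa [add_comm] at heven)

theorem Rat.sq_sub_mul_sq_ne_neg_one_s6 {d ℓ : ℕ} (hd : Squarefree d) (hℓ : ℓ.Prime) (hℓd : ℓ ∣ d)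
    (hℓ4 : ℓ % 4 = 3) (x y : ℚ) : x ^ 2 - d * y ^ 2 ≠ -1 := by
  intro h
  let n : ℤ := x.den * y.den
  have hcleared : (x * n) ^ 2 + (n : ℚ) ^ 2 = d * (y * n) ^ 2 := by linear_combination n ^ 2 * h
  have hx : x * n = (x.num * y.den : ℤ) := by
    push_cast [n]; rw [← Rat.mul_den_eq_num x]; ring
  have hy : y * n = (y.num * x.den : ℤ) := by
    push_cast [n]; rw [← Rat.mul_den_eq_num y]; ring
  rw [hx, hy] at hcleared
  have hy0 : y ≠ 0 := by rintro rfl; nlinarith [sq_nonneg x]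
  refine Int.sq_add_sq_ne_mul_sq hd hℓ hℓd hℓ4 (b := y.num * x.den) ?_ (by exact_mod_cast hcleared)
  exact mul_ne_zero (Rat.num_ne_zero.2 hy0) (by positivity)

theorem Nat.not_isSquare_of_squarefree {d : ℕ} (hd : Squarefree d) (hd1 : d ≠ 1) : ¬IsSquare d := by
  rintro ⟨k, rfl⟩
  exact hd1 (by rw [Nat.isUnit_iff.1 (hd k dvd_rfl)])

theorem QuadraticAlgebra.algebraNorm_eq_norm {R : Type*} [CommRing R] {a b : R}
    (z : QuadraticAlgebra R a b) : Algebra.norm R z = z.norm :=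
  det_toLinearMap_eq_norm z

theorem Algebra.exists_norm_eq_norm_of_algHom {K F E : Type*} [Field K] [Field F] [Field E]
    [Algebra K F] [Algebra K E] (f : F →ₐ[K] E) (x : E) :
    ∃ y : F, Algebra.norm K y = Algebra.norm K x := by
  let := f.toAlgebra
  have := IsScalarTower.of_algHom f
  exact ⟨Algebra.norm F x, Algebra.norm_norm⟩

section SqrtAdjunction

variable {K L : Type*} [Field K] [Field L] [Algebra K L] {c : K} {r : L}

theorem isIntegral_of_mul_self_eq_algebraMap (hr : r * r = algebraMap K L c) : IsIntegral K r :=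
  ⟨X ^ 2 - C c, monic_X_pow_sub_C _ two_ne_zero, by simp [sq, hr]⟩

namespace IntermediateField

noncomputable def adjoinSqrtLift (hr : r * r = algebraMap K L c) :
    QuadraticAlgebra K c 0 →ₐ[K] K⟮r⟯ :=
  QuadraticAlgebra.lift ⟨AdjoinSimple.gen K r, Subtype.ext (by simp [hr, Algebra.smul_def])⟩

theorem coe_adjoinSqrtLift (hr : r * r = algebraMap K L c) (z : QuadraticAlgebra K c 0) :
    (adjoinSqrtLift hr z : L) = algebraMap K L z.re + algebraMap K L z.im * r := by
  simp [adjoinSqrtLift, Algebra.smul_def]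

theorem adjoinSqrtLift_injective (hr : r * r = algebraMap K L c)
    (hirr : r ∉ Set.range (algebraMap K L)) : Function.Injective (adjoinSqrtLift hr) := by
  refine (injective_iff_map_eq_zero _).2 fun z hz => ?_
  have hz' := coe_adjoinSqrtLift hr z
  rw [hz, ZeroMemClass.coe_zero] at hz'
  have him : z.im = 0 := by
    by_contra him
    refine hirr ⟨-z.re / z.im, ?_⟩
    rw [map_div₀, map_neg, div_eq_iff (by simpa using him)]
    linear_combination hz'
  ext
  · simpa [him] using hz'.symm
  · exact him

theorem adjoinSqrtLift_surjective (hr : r * r = algebraMap K L c) :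
    Function.Surjective (adjoinSqrtLift hr) := by
  intro w
  obtain ⟨p, hp⟩ : (w : L) ∈ Set.range (aeval (R := K) r) := by
    rw [← AlgHom.coe_range, ← Algebra.adjoin_singleton_eq_range_aeval,
      ← adjoin_simple_toSubalgebra_of_isAlgebraic
        (isIntegral_of_mul_self_eq_algebraMap hr).isAlgebraic]
    exact w.2
  refine ⟨aeval QuadraticAlgebra.omega p, Subtype.ext ?_⟩
  have := aeval_algHom_apply (K⟮r⟯.val.comp (adjoinSqrtLift hr)) QuadraticAlgebra.omega p
  simpa [adjoinSqrtLift, hp] using this.symm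

theorem norm_adjoinSqrtLift (hr : r * r = algebraMap K L c)
    (hirr : r ∉ Set.range (algebraMap K L)) (z : QuadraticAlgebra K c 0) :
    Algebra.norm K (adjoinSqrtLift hr z) = z.re ^ 2 - c * z.im ^ 2 := by
  rw [← AlgEquiv.ofBijective_apply (adjoinSqrtLift hr)
      ⟨adjoinSqrtLift_injective hr hirr, adjoinSqrtLift_surjective hr⟩,
    Algebra.norm_eq_of_algEquiv,
    QuadraticAlgebra.algebraNorm_eq_norm, QuadraticAlgebra.norm_def]
  ring

theorem norm_adjoin_sqrt_eq (hr : r * r = algebraMap K L c)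
    (hirr : r ∉ Set.range (algebraMap K L)) {w : K⟮r⟯} {x y : K}
    (hw : (w : L) = algebraMap K L x + algebraMap K L y * r) :
    Algebra.norm K w = x ^ 2 - c * y ^ 2 := by
  have : w = adjoinSqrtLift hr ⟨x, y⟩ := Subtype.ext (by rw [hw, coe_adjoinSqrtLift])
  rw [this, norm_adjoinSqrtLift hr hirr]

theorem exists_norm_adjoin_sqrt_eq (hr : r * r = algebraMap K L c)
    (hirr : r ∉ Set.range (algebraMap K L)) (w : K⟮r⟯) :
    ∃ x y : K, Algebra.norm K w = x ^ 2 - c * y ^ 2 := by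
  obtain ⟨z, rfl⟩ := adjoinSqrtLift_surjective hr w
  exact ⟨z.re, z.im, norm_adjoinSqrtLift hr hirr z⟩

end IntermediateField

end SqrtAdjunction

theorem norm_eq_neg_one_of_coe_eq_one_add_sqrt_two {w : Qrt2} (hw : (w : ℝ) = 1 + √2) :
    Algebra.norm ℚ w = -1 :=
  (norm_adjoin_sqrt_eq (c := 2) (x := 1) (y := 1) (by simp) irrational_sqrt_two
    (by simp [hw])).trans (by norm_num)

theorem sqrt_mem_ktwo (d : ℕ) : √(d : ℝ) ∈ ktwo d :=
  subset_adjoin _ _ (Set.mem_insert_of_mem _ rfl)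

theorem exists_norm_ktwo_eq_sq_sub_mul_sq {d : ℕ} (hd : ¬IsSquare d) (u : ktwo d) :
    ∃ x y : ℚ, Algebra.norm ℚ u = x ^ 2 - d * y ^ 2 := by
  have hle : ℚ⟮√(d : ℝ)⟯ ≤ (ktwo d).restrictScalars ℚ := adjoin_simple_le_iff.2 (sqrt_mem_ktwo d)
  -- `toRatAlgHom` moves `inclusion hle` from the `ℚ`-algebra structure of `restrictScalars` to
  -- the canonical one of the field `ktwo d`, which is the one in `Algebra.norm ℚ u`.
  let f : ℚ⟮√(d : ℝ)⟯ →ₐ[ℚ] ktwo d := (inclusion hle).toRingHom.toRatAlgHom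
  obtain ⟨w, hw⟩ := Algebra.exists_norm_eq_norm_of_algHom f u
  rw [← hw]
  exact exists_norm_adjoin_sqrt_eq (by simp) (irrational_sqrt_natCast_iff.2 hd) w

theorem stmt6_general (d : ℕ) (hd : Squarefree d)
    (hpf : ∃ ℓ : ℕ, ℓ.Prime ∧ ℓ ∣ d ∧ ℓ % 4 = 3) :
    ¬ ∃ u : ↥(ktwo d), ((Algebra.norm ↥Qrt2 u : ↥Qrt2) : ℝ) = 1 + Real.sqrt 2 := by
  rintro ⟨u, hu⟩
  obtain ⟨ℓ, hℓ, hℓd, hℓ4⟩ := hpf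
  have hnorm : Algebra.norm ℚ u = -1 := by
    rw [← Algebra.norm_norm (S := Qrt2)]
    exact norm_eq_neg_one_of_coe_eq_one_add_sqrt_two hu
  have hd1 : d ≠ 1 := by
    rintro rfl
    exact hℓ.one_lt.ne' (Nat.dvd_one.1 hℓd)
  obtain ⟨x, y, hxy⟩ := exists_norm_ktwo_eq_sq_sub_mul_sq (Nat.not_isSquare_of_squarefree hd hd1) u
  exact Rat.sq_sub_mul_sq_ne_neg_one_s6 hd hℓ hℓd hℓ4 x y (hxy ▸ hnorm)

/-- Let `d` be a positive squarefree integer having a prime factor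
congruent to `3` modulo `4`. Then there is no element `u` of the field
`k₂ = ℚ(√(2+√2), √d)` whose field norm from `k₂` down to `ℚ(√2)` equals `1 + √2`. -/
theorem stmt6 (d : ℕ) (hd0 : 0 < d) (hd : Squarefree d)
    (hpf : ∃ ℓ : ℕ, ℓ.Prime ∧ ℓ ∣ d ∧ ℓ % 4 = 3) :
    ¬ ∃ u : ↥(ktwo d), ((Algebra.norm ↥Qrt2 u : ↥Qrt2) : ℝ) = 1 + Real.sqrt 2 :=
  stmt6_general d hd hpf
end
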